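/- Let c ≥ 1 be a real number and let f : ℝ → ℝ satisfy the functional equation (f(x))³ = 1 + 3x + x² f(x+2) for all x ≥ 1, together with the bounds c⁻¹(x+1) ≤ f(x) ≤ c(x+1) for all x ≥ 1. Then for every natural number k and every x ≥ 1, c^{-1/3^k}(x+1) ≤ f(x) ≤ c^{1/3^k}(x+1). -/
import Mathlib

lemma cube_step (c : ℝ) (hc : 1 ≤ c) (f : ℝ → ℝ)
    (hfe : ∀ x : ℝ, 1 ≤ x → (f x) ^ 3 = 1 + 3 * x + x ^ 2 * f (x + 2))
    (a : ℝ) (ha : 0 ≤ a)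
    (h : ∀ x : ℝ, 1 ≤ x → c ^ (-a) * (x + 1) ≤ f x ∧ f x ≤ c ^ a * (x + 1)) :
    ∀ x : ℝ, 1 ≤ x → c ^ (-(a/3)) * (x + 1) ≤ f x ∧ f x ≤ c ^ (a/3) * (x + 1) := by
  have hc0 : (0:ℝ) < c := lt_of_lt_of_le one_pos hc
  have hca : (1:ℝ) ≤ c ^ a := Real.one_le_rpow hc ha
  have hca' : c ^ (-a) ≤ 1 := by
    rw [Real.rpow_neg hc0.le]
    exact inv_le_one_of_one_le₀ hca
  have hcube : ∀ b : ℝ, (c ^ (b/3)) ^ 3 = c ^ b := by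
    intro b
    rw [← Real.rpow_natCast (c ^ (b/3)) 3, ← Real.rpow_mul hc0.le]
    norm_num
  intro x hx
  have hx2 : (1:ℝ) ≤ x + 2 := by linarith
  have hb := h (x + 2) hx2
  have hfx3 := hfe x hx
  constructor
  · -- lower bound
    have h1 : c ^ (-a) * (1 + 3*x + x^2 * (x + 3)) ≤ (f x) ^ 3 := by
      rw [hfx3]
      have h2 : c ^ (-a) * (x + 2 + 1) ≤ f (x + 2) := hb.1
      nlinarith [sq_nonneg x, hb.1]
    have h3 : (c ^ (-(a/3)) * (x + 1)) ^ 3 ≤ (f x) ^ 3 := by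
      have : (c ^ (-(a/3)) * (x + 1)) ^ 3 = c ^ (-a) * (x+1)^3 := by
        rw [mul_pow]
        have : -a / 3 = -(a/3) := by ring
        rw [← this, hcube]
      rw [this]
      nlinarith
    have hfpos : 0 ≤ f x := le_trans (by positivity) (h x hx).1
    exact le_of_pow_le_pow_left₀ (by norm_num) hfpos h3
  · have h1 : (f x) ^ 3 ≤ c ^ a * (1 + 3*x + x^2 * (x + 3)) := by
      rw [hfx3]
      nlinarith [hb.2, sq_nonneg x]
    have h3 : (f x) ^ 3 ≤ (c ^ (a/3) * (x + 1)) ^ 3 := by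
      have : (c ^ (a/3) * (x + 1)) ^ 3 = c ^ a * (x+1)^3 := by
        rw [mul_pow, hcube]
      rw [this]
      nlinarith
    have hfpos : 0 ≤ f x := le_trans (by positivity) (h x hx).1
    exact le_of_pow_le_pow_left₀ (by norm_num) (by positivity) h3

theorem bounds_improve_iterated (c : ℝ) (hc : 1 ≤ c) (f : ℝ → ℝ)
    (hfe : ∀ x : ℝ, 1 ≤ x → (f x) ^ 3 = 1 + 3 * x + x ^ 2 * f (x + 2))
    (hlb : ∀ x : ℝ, 1 ≤ x → c⁻¹ * (x + 1) ≤ f x)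
    (hub : ∀ x : ℝ, 1 ≤ x → f x ≤ c * (x + 1)) :
    ∀ (k : ℕ) (x : ℝ), 1 ≤ x →
      c ^ (-(1 / 3 ^ k) : ℝ) * (x + 1) ≤ f x ∧ f x ≤ c ^ ((1 / 3 ^ k) : ℝ) * (x + 1) := by
  have hc0 : (0:ℝ) < c := lt_of_lt_of_le one_pos hc
  intro k
  induction k with
  | zero =>
    intro x hx
    have e1 : c ^ (-(1 / 3 ^ 0) : ℝ) = c⁻¹ := by norm_num [Real.rpow_neg_one]
    have e2 : c ^ ((1 / 3 ^ 0) : ℝ) = c := by norm_num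
    rw [e1, e2]
    exact ⟨hlb x hx, hub x hx⟩
  | succ k ih =>
    have ha : (0:ℝ) ≤ 1 / 3 ^ k := by positivity
    have key := cube_step c hc f hfe (1 / 3 ^ k) ha ih
    have heq : (1 / 3 ^ (k+1) : ℝ) = (1 / 3 ^ k) / 3 := by
      rw [pow_succ]; ring
    intro x hx
    rw [heq]
    exact key x hx
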